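/- Under the same hypotheses (H = L + W on the complete graph, W_m = 0 the unique smallest eigenvalue, spectral ratio bounded by κ), the spectral gap satisfies γ ≥ h_{{m}}/κ³, where h_{{m}} = max{g_{{m}}, g_{𝒱∖{m}}} is the Cheeger ratio of the cut isolating m. Combined with the general upper bound, 2·h_{{m}} ≥ γ ≥ h_{{m}}/κ³. -/

import Mathlib

/-!
The ground state of `H = L + W` solves `φ₀ u * (V + W u - λ₀) = ∑ φ₀`, so with `x = V - λ₀` the
Cheeger ratio is explicit: `g_{m} = x - 1` and `g_{𝒱∖{m}} ≤ (x + W_max) / x`.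

Upper bound: the Rayleigh quotient of `φ₀ · f`, with `f` constant on `{m}` and on its complement
and chosen orthogonal to `φ₀`, is exactly `λ₀ + g_{m} + g_{𝒱∖{m}}`.

Lower bound: take an eigenvector `ψ` of `λ₁` orthogonal to `φ₀`. If `∑ ψ = 0` then
`λ₁ = V + W u` for some `u ≠ m`, so `γ ≥ x + W_min`. Otherwise orthogonality reads
`∑ u, 1 / ((V + W u - λ₀) (V + W u - λ₁)) = 0`, which forces `λ₁ = V + s` with `s > 0` and
`(x + W_min) (W_min - s) ≤ (V - 1) x s`. Summing `φ₀ v (x + W v) = ∑ φ₀` over `v ≠ m` with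
`W v ≤ κ W_min` gives `(V - 1) x ≤ (x - 1) (x + κ W_min)`, and elementary algebra then yields
`h_{m} ≤ κ³ (x + s) = κ³ γ`.
-/

open Matrix

/-- The `i`-th smallest eigenvalue (with multiplicity) of a Hermitian matrix. -/
noncomputable def sortedEig {n : ℕ} {A : Matrix (Fin n) (Fin n) ℝ}
    (hA : A.IsHermitian) (i : Fin n) : ℝ :=
  hA.eigenvalues (Tuple.sort hA.eigenvalues i)

/-- The spectral gap: difference between the two lowest eigenvalues. -/
noncomputable def specGap {n : ℕ} (hn : 2 ≤ n) {A : Matrix (Fin n) (Fin n) ℝ}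
    (hA : A.IsHermitian) : ℝ :=
  sortedEig hA ⟨1, by omega⟩ - sortedEig hA ⟨0, by omega⟩

/-- The combinatorial Laplacian of the complete graph on `V` vertices:
`L = V·I − J`, where `J` is the all-ones matrix. -/
def cgL (V : ℕ) : Matrix (Fin V) (Fin V) ℝ :=
  (V : ℝ) • (1 : Matrix (Fin V) (Fin V) ℝ) - Matrix.of (fun _ _ => (1 : ℝ))

/-- The weighted Cheeger ratio `h_{{m}} = max{g_{{m}}, g_{𝒱∖{m}}}` of the cut isolating
the vertex `m`, with respect to the (positive) ground state `φ`. -/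
noncomputable def cheegerRatio {V : ℕ} (φ : Fin V → ℝ) (m : Fin V) : ℝ :=
  max ((∑ v ∈ Finset.univ.erase m, φ v) / φ m)
    (φ m * (∑ v ∈ Finset.univ.erase m, φ v) / ∑ v ∈ Finset.univ.erase m, (φ v) ^ 2)

theorem OrthonormalBasis.dotProduct_eq_sum {ι : Type*} [Fintype ι]
    (b : OrthonormalBasis ι ℝ (EuclideanSpace ℝ ι)) (x y : ι → ℝ) :
    x ⬝ᵥ y = ∑ i, (⇑(b i) ⬝ᵥ x) * (⇑(b i) ⬝ᵥ y) := by
  have h := b.sum_inner_mul_inner (WithLp.toLp 2 x) (WithLp.toLp 2 y)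
  simp only [EuclideanSpace.inner_eq_star_dotProduct, star_trivial] at h
  rw [dotProduct_comm x, ← h]
  exact Finset.sum_congr rfl fun i _ => by rw [dotProduct_comm y]

theorem Finset.sum_ite_eq_add_sum_erase {ι M : Type*} [Fintype ι] [DecidableEq ι]
    [AddCommMonoid M] (m : ι) (f g : ι → M) :
    ∑ u, (if u = m then f u else g u) = f m + ∑ v ∈ Finset.univ.erase m, g v := by
  rw [← Finset.add_sum_erase _ _ (Finset.mem_univ m), if_pos rfl]
  congr 1
  exact Finset.sum_congr rfl fun v hv => if_neg (Finset.ne_of_mem_erase hv)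

theorem Finset.sum_mul_ite_eq {ι R : Type*} [Fintype ι] [DecidableEq ι]
    [NonUnitalNonAssocSemiring R] (m : ι) (g : ι → R) (α β : R) :
    ∑ u, g u * (if u = m then α else β) = g m * α + (∑ v ∈ Finset.univ.erase m, g v) * β := by
  simp only [mul_ite, Finset.sum_ite_eq_add_sum_erase, Finset.sum_mul]

theorem Fin.univ_erase_nonempty {V : ℕ} (hV : 2 ≤ V) (m : Fin V) :
    (Finset.univ.erase m).Nonempty := by
  have : Nontrivial (Fin V) := Fin.nontrivial_iff_two_le.mpr hV
  obtain ⟨v, hv⟩ := exists_ne m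
  exact ⟨v, Finset.mem_erase.mpr ⟨hv, Finset.mem_univ v⟩⟩

theorem Fin.cast_card_univ_erase {V : ℕ} (m : Fin V) :
    ((Finset.univ.erase m).card : ℝ) = V - 1 := by
  rw [Finset.card_erase_of_mem (Finset.mem_univ m), Finset.card_univ, Fintype.card_fin,
    Nat.cast_sub m.pos]
  simp

theorem max_le_pow_three_mul {κ a x s : ℝ} (hκ : 1 ≤ κ) (ha : 0 < a) (hx : 1 ≤ x)
    (hs : 0 ≤ s) (h : (x + a) * (a - s) ≤ (x - 1) * (x + κ * a) * s) :
    max (x - 1) ((x + κ * a) / x) ≤ κ ^ 3 * (x + s) := by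
  have hκ0 : 0 ≤ κ - 1 := sub_nonneg.mpr hκ
  have hslack : (x - 1) * (x + κ * a) + (x + a) ≤ κ ^ 2 * x * (x + a) := by
    nlinarith [mul_nonneg (mul_nonneg (zero_le_one.trans hκ) hκ0) (mul_nonneg
      (zero_le_one.trans hx) ha.le), mul_nonneg (sub_nonneg.mpr (one_le_pow₀ hκ : 1 ≤ κ ^ 2))
      (sq_nonneg x), mul_nonneg hκ0 ha.le]
  have ha_le : a ≤ κ ^ 2 * x * s := by
    refine le_of_mul_le_mul_right ?_ (by linarith : 0 < x + a)
    nlinarith [mul_le_mul_of_nonneg_left hslack hs]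
  have hκ3 : 1 ≤ κ ^ 3 := one_le_pow₀ hκ
  refine max_le (by nlinarith) ((div_le_iff₀ (by linarith)).mpr ?_)
  nlinarith [mul_le_mul_of_nonneg_left ha_le (by linarith : 0 ≤ κ),
    mul_le_mul_of_nonneg_right hκ3 (by nlinarith : 0 ≤ x * x)]

section SortedSpectrum

variable {n : ℕ} {A : Matrix (Fin n) (Fin n) ℝ} (hA : A.IsHermitian)

noncomputable def sortedEigvec (i : Fin n) : Fin n → ℝ :=
  ⇑(hA.eigenvectorBasis (Tuple.sort hA.eigenvalues i))

theorem mulVec_sortedEigvec (i : Fin n) :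
    A *ᵥ sortedEigvec hA i = sortedEig hA i • sortedEigvec hA i :=
  hA.mulVec_eigenvectorBasis _

theorem sortedEigvec_ne_zero (i : Fin n) : sortedEigvec hA i ≠ 0 := by
  intro h
  have h1 := hA.eigenvectorBasis.orthonormal.1 (Tuple.sort hA.eigenvalues i)
  rw [show hA.eigenvectorBasis (Tuple.sort hA.eigenvalues i) = 0 from
    (WithLp.ofLp_injective 2) h] at h1
  simp at h1

theorem sortedEigvec_dotProduct_of_ne {i j : Fin n} (hij : i ≠ j) :
    sortedEigvec hA i ⬝ᵥ sortedEigvec hA j = 0 := by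
  have h : inner ℝ (hA.eigenvectorBasis _) (hA.eigenvectorBasis _) = 0 :=
    hA.eigenvectorBasis.orthonormal.2 ((Tuple.sort hA.eigenvalues).injective.ne hij)
  rwa [EuclideanSpace.inner_eq_star_dotProduct, star_trivial, dotProduct_comm] at h

theorem sortedEigvec_dotProduct_mulVec (i : Fin n) (ψ : Fin n → ℝ) :
    sortedEigvec hA i ⬝ᵥ (A *ᵥ ψ) = sortedEig hA i * (sortedEigvec hA i ⬝ᵥ ψ) := by
  rw [dotProduct_mulVec, ← mulVec_transpose, (isHermitian_iff_isSymm.mp hA).eq,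
    mulVec_sortedEigvec, smul_dotProduct, smul_eq_mul]

theorem sortedEig_mul_dotProduct_self_le (k : Fin n) (ψ : Fin n → ℝ)
    (hψ : ∀ j < k, sortedEigvec hA j ⬝ᵥ ψ = 0) :
    sortedEig hA k * (ψ ⬝ᵥ ψ) ≤ ψ ⬝ᵥ (A *ᵥ ψ) := by
  set σ := Tuple.sort hA.eigenvalues
  rw [hA.eigenvectorBasis.dotProduct_eq_sum, hA.eigenvectorBasis.dotProduct_eq_sum,
    Finset.mul_sum]
  refine (Equiv.sum_comp σ _).symm.le.trans
    ((Finset.sum_le_sum fun j _ => ?_).trans (Equiv.sum_comp σ _).le)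
  change sortedEig hA k * ((sortedEigvec hA j ⬝ᵥ ψ) * (sortedEigvec hA j ⬝ᵥ ψ)) ≤
    (sortedEigvec hA j ⬝ᵥ ψ) * (sortedEigvec hA j ⬝ᵥ (A *ᵥ ψ))
  rw [sortedEigvec_dotProduct_mulVec]
  rcases lt_or_ge j k with hjk | hkj
  · simp [hψ j hjk]
  · have : sortedEig hA k ≤ sortedEig hA j := Tuple.monotone_sort hA.eigenvalues hkj
    nlinarith [mul_self_nonneg (sortedEigvec hA j ⬝ᵥ ψ)]

end SortedSpectrum

namespace cgL

section Eigenvectors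

variable {V : ℕ} {W : Fin V → ℝ}

theorem add_diagonal_mulVec_apply (ψ : Fin V → ℝ) (u : Fin V) :
    ((cgL V + diagonal W) *ᵥ ψ) u = (V + W u) * ψ u - ∑ v, ψ v := by
  have hJ : (of fun _ _ => (1 : ℝ) : Matrix (Fin V) (Fin V) ℝ) *ᵥ ψ = fun _ => ∑ v, ψ v := by
    ext; simp [mulVec, dotProduct]
  rw [cgL, add_mulVec, sub_mulVec, smul_mulVec, one_mulVec, hJ]
  simp only [Pi.add_apply, Pi.sub_apply, Pi.smul_apply, smul_eq_mul, mulVec_diagonal]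
  ring

theorem add_diagonal_mulVec_eq_smul_iff {μ : ℝ} {ψ : Fin V → ℝ} :
    (cgL V + diagonal W) *ᵥ ψ = μ • ψ ↔ ∀ u, ψ u * (V + W u - μ) = ∑ v, ψ v := by
  simp only [funext_iff, add_diagonal_mulVec_apply, Pi.smul_apply, smul_eq_mul]
  exact forall_congr' fun u => by constructor <;> intro h <;> linarith

theorem exists_ne_eq_add_of_sum_eq_zero {μ : ℝ} {ψ : Fin V → ℝ}
    (hψ : (cgL V + diagonal W) *ᵥ ψ = μ • ψ) (hne : ψ ≠ 0) (hsum : ∑ v, ψ v = 0) (m : Fin V) :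
    ∃ u ≠ m, μ = V + W u := by
  have e := add_diagonal_mulVec_eq_smul_iff.mp hψ
  by_contra! h
  have hzero : ∀ u ≠ m, ψ u = 0 := fun u hu =>
    (mul_eq_zero.mp ((e u).trans hsum)).resolve_right (sub_ne_zero.mpr (h u hu).symm)
  refine hne (funext fun u => ?_)
  rcases eq_or_ne u m with rfl | hu
  · rwa [Finset.sum_eq_single u (fun v _ hv => hzero v hv) (by simp)] at hsum
  · exact hzero u hu

theorem sum_inv_mul_inv_eq_zero {μ₀ μ₁ : ℝ} {φ ψ : Fin V → ℝ}
    (hφ : (cgL V + diagonal W) *ᵥ φ = μ₀ • φ) (hψ : (cgL V + diagonal W) *ᵥ ψ = μ₁ • ψ)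
    (hφs : ∑ v, φ v ≠ 0) (hψs : ∑ v, ψ v ≠ 0) (horth : φ ⬝ᵥ ψ = 0) :
    ∑ u, ((V + W u - μ₀) * (V + W u - μ₁))⁻¹ = 0 := by
  have solve : ∀ {μ} {χ : Fin V → ℝ}, (cgL V + diagonal W) *ᵥ χ = μ • χ → ∑ v, χ v ≠ 0 →
      ∀ u, χ u = (∑ v, χ v) * (V + W u - μ)⁻¹ := by
    intro μ χ hχ hχs u
    have e := add_diagonal_mulVec_eq_smul_iff.mp hχ u
    rw [eq_mul_inv_iff_mul_eq₀ fun h => hχs (by rw [← e, h, mul_zero]), e]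
  have hdot : φ ⬝ᵥ ψ =
      (∑ v, φ v) * (∑ v, ψ v) * ∑ u, ((V + W u - μ₀) * (V + W u - μ₁))⁻¹ := by
    rw [dotProduct, Finset.mul_sum]
    refine Finset.sum_congr rfl fun u _ => ?_
    rw [solve hφ hφs u, solve hψ hψs u, mul_inv]
    ring
  rw [hdot] at horth
  exact (mul_eq_zero.mp horth).resolve_left (mul_ne_zero hφs hψs)

end Eigenvectors

section PositiveEigenvector

variable {V : ℕ} {W : Fin V → ℝ} {φ : Fin V → ℝ} {μ : ℝ}

theorem lt_add_of_pos_eigvec (hφ : ∀ u, 0 < φ u)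
    (h : (cgL V + diagonal W) *ᵥ φ = μ • φ) (u : Fin V) : μ < V + W u := by
  have hS : 0 < ∑ v, φ v := Finset.sum_pos (fun v _ => hφ v) ⟨u, Finset.mem_univ u⟩
  rw [← add_diagonal_mulVec_eq_smul_iff.mp h u] at hS
  exact sub_pos.mp (pos_of_mul_pos_right hS (hφ u).le)

theorem eq_smul_of_pos_eigvec (hφ : ∀ u, 0 < φ u)
    (h : (cgL V + diagonal W) *ᵥ φ = μ • φ) {ψ : Fin V → ℝ}
    (hψ : (cgL V + diagonal W) *ᵥ ψ = μ • ψ) :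
    ψ = ((∑ v, ψ v) / ∑ v, φ v) • φ := by
  ext u
  have hφu := add_diagonal_mulVec_eq_smul_iff.mp h u
  have hψu := add_diagonal_mulVec_eq_smul_iff.mp hψ u
  have hS : 0 < ∑ v, φ v := hφu ▸ mul_pos (hφ u) (sub_pos.mpr (lt_add_of_pos_eigvec hφ h u))
  rw [Pi.smul_apply, smul_eq_mul, div_mul_eq_mul_div, eq_div_iff hS.ne', ← hφu, ← hψu]
  ring

/-- The right-hand side is `½ ∑ u v, φ u * φ v * (f u - f v) ^ 2` (ground-state transform). -/
theorem dotProduct_mulVec_mul_sub_eq (h : (cgL V + diagonal W) *ᵥ φ = μ • φ)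
    (f : Fin V → ℝ) :
    (fun u => φ u * f u) ⬝ᵥ ((cgL V + diagonal W) *ᵥ fun u => φ u * f u) -
        μ * ((fun u => φ u * f u) ⬝ᵥ fun u => φ u * f u) =
      (∑ u, φ u) * (∑ u, φ u * f u ^ 2) - (∑ u, φ u * f u) ^ 2 := by
  have hφ := add_diagonal_mulVec_eq_smul_iff.mp h
  set T := ∑ u, φ u * f u
  calc _ = ∑ u, ((∑ v, φ v) * (φ u * f u ^ 2) - T * (φ u * f u)) := by
        simp only [dotProduct, add_diagonal_mulVec_apply, Finset.mul_sum,
          ← Finset.sum_sub_distrib]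
        exact Finset.sum_congr rfl fun u _ => by linear_combination (φ u * f u ^ 2) * hφ u
    _ = _ := by rw [Finset.sum_sub_distrib, ← Finset.mul_sum, ← Finset.mul_sum, sq]

variable {m : Fin V}

theorem lt_of_pos_eigvec (hφ : ∀ u, 0 < φ u) (h : (cgL V + diagonal W) *ᵥ φ = μ • φ)
    (hWm : W m = 0) : μ < V := by
  simpa only [hWm, add_zero] using lt_add_of_pos_eigvec hφ h m

theorem mul_sub_eq_sum (h : (cgL V + diagonal W) *ᵥ φ = μ • φ) (hWm : W m = 0) :
    φ m * (V - μ) = ∑ v, φ v := by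
  simpa only [hWm, add_zero] using add_diagonal_mulVec_eq_smul_iff.mp h m

theorem sum_erase_eq_mul (h : (cgL V + diagonal W) *ᵥ φ = μ • φ) (hWm : W m = 0) :
    ∑ v ∈ Finset.univ.erase m, φ v = φ m * (V - μ - 1) := by
  have hm := mul_sub_eq_sum h hWm
  rw [← Finset.add_sum_erase _ _ (Finset.mem_univ m)] at hm
  linarith

theorem sum_le_mul_of_le {b : ℝ} (h : (cgL V + diagonal W) *ᵥ φ = μ • φ) (hφ : ∀ u, 0 < φ u)
    (hb : ∀ v ≠ m, W v ≤ b) {v : Fin V} (hv : v ≠ m) :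
    ∑ u, φ u ≤ φ v * (V - μ + b) := by
  rw [← add_diagonal_mulVec_eq_smul_iff.mp h v]
  nlinarith [hφ v, hb v hv]

theorem card_mul_le {b : ℝ} (h : (cgL V + diagonal W) *ᵥ φ = μ • φ) (hφ : ∀ u, 0 < φ u)
    (hWm : W m = 0) (hb : ∀ v ≠ m, W v ≤ b) :
    (V - 1) * (V - μ) ≤ (V - μ - 1) * (V - μ + b) := by
  have hsum := Finset.sum_le_sum fun v (hv : v ∈ Finset.univ.erase m) =>
    sum_le_mul_of_le h hφ hb (Finset.ne_of_mem_erase hv)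
  rw [Finset.sum_const, nsmul_eq_mul, Fin.cast_card_univ_erase, ← Finset.sum_mul,
    sum_erase_eq_mul h hWm, ← mul_sub_eq_sum h hWm] at hsum
  nlinarith [hφ m]

theorem mul_sum_erase_div_le {b : ℝ} (hV : 2 ≤ V) (h : (cgL V + diagonal W) *ᵥ φ = μ • φ)
    (hφ : ∀ u, 0 < φ u) (hWm : W m = 0) (hb : ∀ v ≠ m, W v ≤ b) :
    φ m * (∑ v ∈ Finset.univ.erase m, φ v) / ∑ v ∈ Finset.univ.erase m, φ v ^ 2 ≤
      (V - μ + b) / (V - μ) := by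
  have hB : 0 < ∑ v ∈ Finset.univ.erase m, φ v ^ 2 :=
    Finset.sum_pos (fun v _ => pow_pos (hφ v) 2) (Fin.univ_erase_nonempty hV m)
  have hx : 0 < (V : ℝ) - μ := sub_pos.mpr (lt_of_pos_eigvec hφ h hWm)
  rw [div_le_div_iff₀ hB hx]
  calc φ m * (∑ v ∈ Finset.univ.erase m, φ v) * (V - μ)
      = ∑ v ∈ Finset.univ.erase m, φ v * ∑ u, φ u := by
        rw [← Finset.sum_mul, ← mul_sub_eq_sum h hWm]; ring
    _ ≤ ∑ v ∈ Finset.univ.erase m, φ v * (φ v * (V - μ + b)) :=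
        Finset.sum_le_sum fun v hv => mul_le_mul_of_nonneg_left
          (sum_le_mul_of_le h hφ hb (Finset.ne_of_mem_erase hv)) (hφ v).le
    _ = (V - μ + b) * ∑ v ∈ Finset.univ.erase m, φ v ^ 2 := by
        rw [Finset.mul_sum]; exact Finset.sum_congr rfl fun v _ => by ring

theorem lt_of_sum_ne_zero_of_orthogonal {μ₀ μ₁ : ℝ} {ψ : Fin V → ℝ}
    (hφ : ∀ u, 0 < φ u) (hφeig : (cgL V + diagonal W) *ᵥ φ = μ₀ • φ)
    (hψeig : (cgL V + diagonal W) *ᵥ ψ = μ₁ • ψ) (hsum : ∑ v, ψ v ≠ 0) (horth : φ ⬝ᵥ ψ = 0)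
    (hW : ∀ u, 0 ≤ W u) :
    (V : ℝ) < μ₁ := by
  obtain ⟨u₀, -, -⟩ := Finset.exists_ne_zero_of_sum_ne_zero hsum
  have hsec := sum_inv_mul_inv_eq_zero hφeig hψeig
    (Finset.sum_pos (fun v _ => hφ v) ⟨u₀, Finset.mem_univ u₀⟩).ne' hsum horth
  by_contra! hμ₁
  refine hsec.not_gt (Finset.sum_pos (fun u _ => inv_pos.mpr (mul_pos
    (sub_pos.mpr (lt_add_of_pos_eigvec hφ hφeig u)) ?_)) ⟨u₀, Finset.mem_univ u₀⟩)
  refine lt_of_le_of_ne (by linarith [hW u]) fun h => hsum ?_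
  rw [← add_diagonal_mulVec_eq_smul_iff.mp hψeig u, ← h, mul_zero]

theorem mul_le_of_sum_ne_zero_of_orthogonal {μ₀ μ₁ a : ℝ} {ψ : Fin V → ℝ}
    (hφ : ∀ u, 0 < φ u) (hφeig : (cgL V + diagonal W) *ᵥ φ = μ₀ • φ)
    (hψeig : (cgL V + diagonal W) *ᵥ ψ = μ₁ • ψ) (hsum : ∑ v, ψ v ≠ 0) (horth : φ ⬝ᵥ ψ = 0)
    (hWm : W m = 0) (haW : ∀ v ≠ m, a ≤ W v) (hμ₁ : (V : ℝ) < μ₁) (ha : μ₁ - V < a) :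
    (V - μ₀ + a) * (a - (μ₁ - V)) ≤ (V - 1) * ((V - μ₀) * (μ₁ - V)) := by
  set x := (V : ℝ) - μ₀
  set s := μ₁ - V
  have hx : 0 < x := sub_pos.mpr (lt_of_pos_eigvec hφ hφeig hWm)
  have hs : 0 < s := sub_pos.mpr hμ₁
  have hP : 0 < (x + a) * (a - s) := mul_pos (by linarith) (by linarith)
  have hterm : ∀ v ∈ Finset.univ.erase m,
      ((V + W v - μ₀) * (V + W v - μ₁))⁻¹ ≤ ((x + a) * (a - s))⁻¹ := fun v hv => by
    have hv := haW v (Finset.ne_of_mem_erase hv)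
    exact inv_anti₀ hP (mul_le_mul (by linarith) (by linarith) (by linarith) (by linarith))
  have hsec := sum_inv_mul_inv_eq_zero hφeig hψeig
    (Finset.sum_pos (fun v _ => hφ v) ⟨m, Finset.mem_univ m⟩).ne' hsum horth
  have hrest :
      ∑ v ∈ Finset.univ.erase m, ((V + W v - μ₀) * (V + W v - μ₁))⁻¹ = (x * s)⁻¹ := by
    rw [← Finset.add_sum_erase _ _ (Finset.mem_univ m), hWm,
      show ((V : ℝ) + 0 - μ₀) * (V + 0 - μ₁) = -(x * s) by ring, inv_neg] at hsec
    linarith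
  have hsum_le := Finset.sum_le_sum hterm
  rwa [hrest, Finset.sum_const, nsmul_eq_mul, Fin.cast_card_univ_erase, ← div_eq_mul_inv,
    ← one_div, div_le_div_iff₀ (mul_pos hx hs) hP, one_mul] at hsum_le

theorem orthogonal_eigenvalue_bound {μ₀ μ₁ a : ℝ} {ψ : Fin V → ℝ}
    (hφ : ∀ u, 0 < φ u) (hφeig : (cgL V + diagonal W) *ᵥ φ = μ₀ • φ)
    (hψeig : (cgL V + diagonal W) *ᵥ ψ = μ₁ • ψ) (hne : ψ ≠ 0) (horth : φ ⬝ᵥ ψ = 0)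
    (hWm : W m = 0) (ha : 0 < a) (haW : ∀ v ≠ m, a ≤ W v) :
    (V : ℝ) ≤ μ₁ ∧ (V - μ₀ + a) * (a - (μ₁ - V)) ≤ (V - 1) * ((V - μ₀) * (μ₁ - V)) := by
  suffices h : (V : ℝ) ≤ μ₁ ∧ (a ≤ μ₁ - V ∨
      (V - μ₀ + a) * (a - (μ₁ - V)) ≤ (V - 1) * ((V - μ₀) * (μ₁ - V))) by
    obtain ⟨hμ₁, has | h⟩ := h
    · have hx : 0 < (V : ℝ) - μ₀ := sub_pos.mpr (lt_of_pos_eigvec hφ hφeig hWm)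
      have hV : (1 : ℝ) ≤ V := by exact_mod_cast m.pos
      refine ⟨hμ₁, ?_⟩
      nlinarith [mul_nonneg (sub_nonneg.mpr hV) (mul_nonneg hx.le (sub_nonneg.mpr hμ₁))]
    · exact ⟨hμ₁, h⟩
  by_cases hsum : ∑ v, ψ v = 0
  · obtain ⟨u, hu, hμ⟩ := exists_ne_eq_add_of_sum_eq_zero hψeig hne hsum m
    have has : a ≤ μ₁ - V := by linarith [haW u hu]
    exact ⟨by linarith, Or.inl has⟩
  have hW : ∀ u, 0 ≤ W u := fun u => by
    rcases eq_or_ne u m with rfl | hu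
    exacts [hWm.ge, ha.le.trans (haW u hu)]
  have hμ₁ := lt_of_sum_ne_zero_of_orthogonal hφ hφeig hψeig hsum horth hW
  refine ⟨hμ₁.le, ?_⟩
  rcases le_or_gt a (μ₁ - V) with has | has
  · exact Or.inl has
  · exact Or.inr (mul_le_of_sum_ne_zero_of_orthogonal hφ hφeig hψeig hsum horth hWm haW hμ₁ has)

end PositiveEigenvector

section GroundState

variable {V : ℕ} {W : Fin V → ℝ} {φ : Fin V → ℝ}

theorem sortedEigvec_zero_eq_smul (hV : 2 ≤ V) (hH : (cgL V + diagonal W).IsHermitian)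
    (hφ : ∀ u, 0 < φ u)
    (hEig : (cgL V + diagonal W) *ᵥ φ = sortedEig hH ⟨0, by omega⟩ • φ) :
    ∃ c : ℝ, c ≠ 0 ∧ sortedEigvec hH ⟨0, by omega⟩ = c • φ := by
  have h := eq_smul_of_pos_eigvec hφ hEig (mulVec_sortedEigvec hH _)
  refine ⟨_, fun hc => sortedEigvec_ne_zero hH ⟨0, by omega⟩ ?_, h⟩
  rw [h, hc, zero_smul]

theorem sortedEig_one_mul_le (hV : 2 ≤ V) (hH : (cgL V + diagonal W).IsHermitian)
    (hφ : ∀ u, 0 < φ u)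
    (hEig : (cgL V + diagonal W) *ᵥ φ = sortedEig hH ⟨0, by omega⟩ • φ)
    {ψ : Fin V → ℝ} (hψ : φ ⬝ᵥ ψ = 0) :
    sortedEig hH ⟨1, hV⟩ * (ψ ⬝ᵥ ψ) ≤ ψ ⬝ᵥ ((cgL V + diagonal W) *ᵥ ψ) := by
  refine sortedEig_mul_dotProduct_self_le hH _ ψ fun j hj => ?_
  obtain ⟨c, -, hc⟩ := sortedEigvec_zero_eq_smul hV hH hφ hEig
  rw [show j = ⟨0, by omega⟩ from Fin.ext (by simpa [Fin.lt_def] using hj), hc, smul_dotProduct,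
    hψ, smul_zero]

theorem dotProduct_sortedEigvec_one (hV : 2 ≤ V) (hH : (cgL V + diagonal W).IsHermitian)
    (hφ : ∀ u, 0 < φ u)
    (hEig : (cgL V + diagonal W) *ᵥ φ = sortedEig hH ⟨0, by omega⟩ • φ) :
    φ ⬝ᵥ sortedEigvec hH ⟨1, hV⟩ = 0 := by
  obtain ⟨c, hc0, hc⟩ := sortedEigvec_zero_eq_smul hV hH hφ hEig
  have h := sortedEigvec_dotProduct_of_ne hH (i := ⟨0, by omega⟩) (j := ⟨1, hV⟩) (by simp)
  rw [hc, smul_dotProduct, smul_eq_mul] at h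
  exact (mul_eq_zero.mp h).resolve_left hc0

theorem specGap_le_add (hV : 2 ≤ V) (hH : (cgL V + diagonal W).IsHermitian)
    (hφ : ∀ u, 0 < φ u)
    (hEig : (cgL V + diagonal W) *ᵥ φ = sortedEig hH ⟨0, by omega⟩ • φ) (m : Fin V) :
    specGap hV hH ≤ (∑ v ∈ Finset.univ.erase m, φ v) / φ m +
      φ m * (∑ v ∈ Finset.univ.erase m, φ v) / ∑ v ∈ Finset.univ.erase m, φ v ^ 2 := by
  set A := ∑ v ∈ Finset.univ.erase m, φ v
  set B := ∑ v ∈ Finset.univ.erase m, φ v ^ 2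
  have hB : 0 < B := Finset.sum_pos (fun v _ => pow_pos (hφ v) 2) (Fin.univ_erase_nonempty hV m)
  set f : Fin V → ℝ := fun u => if u = m then B else -φ m ^ 2
  set ψ : Fin V → ℝ := fun u => φ u * f u
  have horth : φ ⬝ᵥ ψ = 0 := by
    simp only [dotProduct, ψ, f, ← mul_assoc, Finset.sum_mul_ite_eq, ← sq, B]
    ring
  have hnorm : ψ ⬝ᵥ ψ = φ m ^ 2 * B * (B + φ m ^ 2) := by
    simp only [dotProduct, ψ, f, mul_mul_mul_comm _ (ite _ _ _), ← sq, ite_pow,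
      Finset.sum_mul_ite_eq, B]
    ring
  have hform : ψ ⬝ᵥ ((cgL V + diagonal W) *ᵥ ψ) - sortedEig hH ⟨0, by omega⟩ * (ψ ⬝ᵥ ψ) =
      φ m * A * (B + φ m ^ 2) ^ 2 := by
    rw [dotProduct_mulVec_mul_sub_eq hEig f, ← Finset.add_sum_erase _ _ (Finset.mem_univ m)]
    simp only [f, ite_pow, Finset.sum_mul_ite_eq]
    ring
  have hray := sortedEig_one_mul_le hV hH hφ hEig horth
  rw [hnorm] at hray hform
  have hm := hφ m
  rw [specGap, div_add_div _ _ hm.ne' hB.ne', le_div_iff₀ (mul_pos hm hB)]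
  refine le_of_mul_le_mul_right ?_ (by positivity : 0 < φ m * (B + φ m ^ 2))
  linear_combination hray + hform

end GroundState

end cgL

/-- For `H = L + W` on the complete graph with `W m = 0` the unique
smallest eigenvalue of `W` and spectral ratio at most `κ`, the spectral gap satisfies
`2 h_{{m}} ≥ γ ≥ h_{{m}}/κ³`. -/
theorem cheeger_complete_graph {V : ℕ} (hV : 2 ≤ V) (W : Fin V → ℝ) (m : Fin V) (κ : ℝ)
    (hWm : W m = 0) (hmin : ∀ u : Fin V, u ≠ m → 0 < W u)
    (hratio : ∀ u v : Fin V, u ≠ m → v ≠ m → W u ≤ κ * W v)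
    (hH : (cgL V + Matrix.diagonal W).IsHermitian)
    (φ₀ : Fin V → ℝ) (hpos : ∀ u, 0 < φ₀ u)
    (hEig : (cgL V + Matrix.diagonal W).mulVec φ₀ = sortedEig hH ⟨0, by omega⟩ • φ₀) :
    specGap hV hH ≤ 2 * cheegerRatio φ₀ m ∧
      cheegerRatio φ₀ m / κ ^ 3 ≤ specGap hV hH := by
  refine ⟨(cgL.specGap_le_add hV hH hpos hEig m).trans ?_, ?_⟩
  · rw [cheegerRatio, two_mul]
    exact add_le_add (le_max_left _ _) (le_max_right _ _)
  set μ₀ := sortedEig hH ⟨0, by omega⟩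
  obtain ⟨v₀, hv₀, hv₀min⟩ :=
    (Finset.univ.erase m).exists_min_image W (Fin.univ_erase_nonempty hV m)
  have hv₀m := Finset.ne_of_mem_erase hv₀
  have hb : ∀ v ≠ m, W v ≤ κ * W v₀ := fun v hv => hratio v v₀ hv hv₀m
  have hκ : 1 ≤ κ := le_of_mul_le_mul_right (by simpa using hb v₀ hv₀m) (hmin v₀ hv₀m)
  obtain ⟨hμ₁, hgap⟩ := cgL.orthogonal_eigenvalue_bound hpos hEig
    (mulVec_sortedEigvec hH ⟨1, hV⟩) (sortedEigvec_ne_zero hH _)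
    (cgL.dotProduct_sortedEigvec_one hV hH hpos hEig) hWm (hmin v₀ hv₀m)
    fun v hv => hv₀min v (Finset.mem_erase.mpr ⟨hv, Finset.mem_univ v⟩)
  have hcard := cgL.card_mul_le hEig hpos hWm hb
  have hA := cgL.sum_erase_eq_mul hEig hWm
  have hx : 1 ≤ (V : ℝ) - μ₀ := by
    have := hA ▸ Finset.sum_nonneg fun v (_ : v ∈ Finset.univ.erase m) => (hpos v).le
    linarith [nonneg_of_mul_nonneg_right this (hpos m)]
  have hγ : specGap hV hH = (V - μ₀) + (sortedEig hH ⟨1, hV⟩ - V) := by rw [specGap]; ring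
  rw [div_le_iff₀ (pow_pos (zero_lt_one.trans_le hκ) 3), mul_comm, hγ]
  calc cheegerRatio φ₀ m ≤ max ((V : ℝ) - μ₀ - 1) ((V - μ₀ + κ * W v₀) / (V - μ₀)) := by
        refine max_le_max ?_ (cgL.mul_sum_erase_div_le hV hEig hpos hWm hb)
        rw [hA, mul_div_cancel_left₀ _ (hpos m).ne']
    _ ≤ _ := max_le_pow_three_mul hκ (hmin v₀ hv₀m) hx (sub_nonneg.mpr hμ₁)
        (hgap.trans (by nlinarith [mul_le_mul_of_nonneg_right hcard (sub_nonneg.mpr hμ₁)]))
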